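/- arXiv:2110.08572 — 4 statements merged into one kernel-verified Lean document; each statement's English description precedes it below -/
import Mathlib

section
/- Let n ≥ 1 be an integer, let A, B, C ∈ ℝ^{n×n} with A and C invertible, and let u ∈ ℝⁿ be nonzero. Set B₊ := Broyd(B, A, u), B̄ := C(B − A), and B̄₊ := C(B₊ − A). Then B̄₊ B̄₊ᵀ = B̄ B̄ᵀ − (B̄ u)(B̄ u)ᵀ / (uᵀ u). -/
open Matrix

noncomputable def vecNorm {n : ℕ} (u : Fin n → ℝ) : ℝ := Real.sqrt (∑ i, u i ^ 2)

noncomputable def frobNorm {n : ℕ} (M : Matrix (Fin n) (Fin n) ℝ) : ℝ :=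
  Real.sqrt (∑ i, ∑ j, M i j ^ 2)

noncomputable def specNorm {n : ℕ} (M : Matrix (Fin n) (Fin n) ℝ) : ℝ :=
  sSup {r : ℝ | ∃ u : Fin n → ℝ, vecNorm u = 1 ∧ r = vecNorm (M.mulVec u)}

noncomputable def broyd {n : ℕ} (B A : Matrix (Fin n) (Fin n) ℝ) (u : Fin n → ℝ) :
    Matrix (Fin n) (Fin n) ℝ :=
  B + (∑ i, u i ^ 2)⁻¹ • ((A - B) * Matrix.vecMulVec u u)

noncomputable def matCLM {n : ℕ} (M : Matrix (Fin n) (Fin n) ℝ) :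
    (Fin n → ℝ) →L[ℝ] (Fin n → ℝ) :=
  LinearMap.toContinuousLinearMap M.mulVecLin

theorem broyden_update_identity {n : ℕ} (hn : 1 ≤ n)
    (A B C : Matrix (Fin n) (Fin n) ℝ) (hA : IsUnit A) (hC : IsUnit C)
    (u : Fin n → ℝ) (hu : u ≠ 0) :
    (C * (broyd B A u - A)) * (C * (broyd B A u - A))ᵀ
      = (C * (B - A)) * (C * (B - A))ᵀ
        - (∑ i, u i ^ 2)⁻¹ •
            Matrix.vecMulVec ((C * (B - A)).mulVec u) ((C * (B - A)).mulVec u) := by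
  have hs : (∑ i, u i ^ 2) ≠ 0 := by
    intro h
    apply hu
    have := (Finset.sum_eq_zero_iff_of_nonneg (fun i _ => sq_nonneg (u i))).mp h
    funext i
    exact pow_eq_zero_iff (n := 2) (by norm_num) |>.mp (this i (Finset.mem_univ i))
  set s := ∑ i, u i ^ 2 with hsdef
  set V := Matrix.vecMulVec u u with hVdef
  set M := C * (B - A) with hMdef
  have hVT : Vᵀ = V := by ext i j; simp [hVdef, vecMulVec, mul_comm]
  have hVV : V * V = s • V := by
    ext i j
    simp [hVdef, vecMulVec, mul_apply, Finset.mul_sum, Finset.sum_mul]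
    rw [Finset.sum_mul]
    congr 1; ext k; ring
  have hW : M * V * Mᵀ = Matrix.vecMulVec (M.mulVec u) (M.mulVec u) := by
    ext i j
    simp [hVdef, vecMulVec, mul_apply, mulVec, dotProduct, Finset.sum_mul, Finset.mul_sum]
    congr 1; ext k; congr 1; ext l; ring
  have hB : C * (broyd B A u - A) = M - s⁻¹ • (M * V) := by
    rw [broyd, hMdef]
    rw [show A - B = -(B - A) from (neg_sub B A).symm]
    simp only [hsdef, neg_mul, smul_neg, mul_neg, mul_sub, mul_add, sub_mul,
      mul_smul_comm, smul_sub, mul_assoc]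
    abel
  clear_value s V M
  rw [hB, ← hW]
  rw [transpose_sub, transpose_smul, transpose_mul, hVT]
  rw [sub_mul, mul_sub, mul_sub, smul_mul_assoc, mul_smul_comm, mul_smul_comm,
    smul_mul_assoc, smul_smul]
  have h1 : M * V * (V * Mᵀ) = s • (M * (V * Mᵀ)) := by
    rw [mul_assoc, ← mul_assoc V, hVV, smul_mul_assoc, mul_smul_comm]
  rw [h1, smul_smul]
  have h2 : s⁻¹ * s⁻¹ * s = s⁻¹ := by field_simp
  rw [h2]
  rw [mul_assoc M V Mᵀ] at hW ⊢
  abel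
end

section
/- Let n ≥ 1 be an integer, let A, B, C ∈ ℝ^{n×n} with A and C invertible, and let u ∈ ℝⁿ be nonzero. Set B₊ := Broyd(B, A, u), B̄ := C(B − A), and B̄₊ := C(B₊ − A). Then ‖B̄₊‖_F ≤ ‖B̄‖_F and ‖B̄₊‖ ≤ ‖B̄‖. -/
open Matrix

/-!
Writing `P := I - u uᵀ / (uᵀ u)` for the orthogonal projection onto `u^⊥`, Broyden's update
satisfies `B₊ - A = (B - A) P`, hence `B̄₊ = B̄ P`. Since `P` is symmetric and `‖P x‖ ≤ ‖x‖`,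
right multiplication by `P` shrinks every row of `B̄` (Frobenius norm) and every vector `B̄` is
applied to (spectral norm).
-/

section VecNorm

variable {n : ℕ}

lemma vecNorm_eq_norm (u : Fin n → ℝ) :
    vecNorm u = ‖(WithLp.toLp 2 u : EuclideanSpace ℝ (Fin n))‖ := by
  simp [vecNorm, EuclideanSpace.norm_eq]

lemma vecNorm_nonneg (u : Fin n → ℝ) : 0 ≤ vecNorm u := Real.sqrt_nonneg _

lemma vecNorm_smul (t : ℝ) (u : Fin n → ℝ) : vecNorm (t • u) = |t| * vecNorm u := by
  simp [vecNorm_eq_norm, WithLp.toLp_smul, norm_smul]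

lemma vecNorm_eq_zero_iff {u : Fin n → ℝ} : vecNorm u = 0 ↔ u = 0 := by
  simp [vecNorm_eq_norm]

lemma sq_vecNorm (u : Fin n → ℝ) : vecNorm u ^ 2 = ∑ i, u i ^ 2 :=
  Real.sq_sqrt (Finset.sum_nonneg fun i _ => sq_nonneg (u i))

end VecNorm

section MatrixNorms

variable {n : ℕ}

lemma vecNorm_mulVec_le_frobNorm_mul (M : Matrix (Fin n) (Fin n) ℝ) (x : Fin n → ℝ) :
    vecNorm (M *ᵥ x) ≤ frobNorm M * vecNorm x := by
  rw [vecNorm, vecNorm, frobNorm, ← Real.sqrt_mul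
    (Finset.sum_nonneg fun i _ => Finset.sum_nonneg fun j _ => sq_nonneg (M i j)), Finset.sum_mul]
  exact Real.sqrt_le_sqrt <| Finset.sum_le_sum fun i _ =>
    Finset.sum_mul_sq_le_sq_mul_sq Finset.univ (M i) x

lemma frobNorm_mul_le_of_forall_vecNorm_vecMul_le (M P : Matrix (Fin n) (Fin n) ℝ)
    (hP : ∀ x, vecNorm (x ᵥ* P) ≤ vecNorm x) : frobNorm (M * P) ≤ frobNorm M := by
  refine Real.sqrt_le_sqrt <| Finset.sum_le_sum fun i _ => ?_
  have hrow : (M * P) i = M i ᵥ* P := rfl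
  rw [← sq_vecNorm, ← sq_vecNorm, hrow]
  exact pow_le_pow_left₀ (vecNorm_nonneg _) (hP (M i)) 2

lemma bddAbove_specNorm_set (M : Matrix (Fin n) (Fin n) ℝ) :
    BddAbove {r : ℝ | ∃ u : Fin n → ℝ, vecNorm u = 1 ∧ r = vecNorm (M *ᵥ u)} := by
  refine ⟨frobNorm M, ?_⟩
  rintro _ ⟨u, hu, rfl⟩
  simpa [hu] using vecNorm_mulVec_le_frobNorm_mul M u

lemma specNorm_nonneg (M : Matrix (Fin n) (Fin n) ℝ) : 0 ≤ specNorm M :=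
  Real.sSup_nonneg <| by
    rintro _ ⟨u, -, rfl⟩
    exact vecNorm_nonneg _

lemma vecNorm_mulVec_le_specNorm_mul (M : Matrix (Fin n) (Fin n) ℝ) (x : Fin n → ℝ) :
    vecNorm (M *ᵥ x) ≤ specNorm M * vecNorm x := by
  rcases eq_or_ne x 0 with rfl | hx
  · simp [vecNorm]
  have ht : 0 < vecNorm x := (vecNorm_nonneg x).lt_of_ne' (vecNorm_eq_zero_iff.not.mpr hx)
  set t := vecNorm x
  have hunit : vecNorm (t⁻¹ • x) = 1 := by
    rw [vecNorm_smul, abs_of_pos (inv_pos.mpr ht), inv_mul_cancel₀ ht.ne']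
  have hx_eq : M *ᵥ x = t • M *ᵥ (t⁻¹ • x) := by
    rw [mulVec_smul, smul_smul, mul_inv_cancel₀ ht.ne', one_smul]
  rw [hx_eq, vecNorm_smul, abs_of_pos ht, mul_comm (specNorm M)]
  exact mul_le_mul_of_nonneg_left (le_csSup (bddAbove_specNorm_set M) ⟨_, hunit, rfl⟩) ht.le

lemma specNorm_mul_le_of_forall_vecNorm_mulVec_le (M P : Matrix (Fin n) (Fin n) ℝ)
    (hP : ∀ x, vecNorm (P *ᵥ x) ≤ vecNorm x) : specNorm (M * P) ≤ specNorm M := by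
  refine Real.sSup_le ?_ (specNorm_nonneg M)
  rintro _ ⟨x, hx, rfl⟩
  calc vecNorm ((M * P) *ᵥ x) = vecNorm (M *ᵥ P *ᵥ x) := by rw [mulVec_mulVec]
    _ ≤ specNorm M * vecNorm (P *ᵥ x) := vecNorm_mulVec_le_specNorm_mul M _
    _ ≤ specNorm M * 1 := mul_le_mul_of_nonneg_left (hx ▸ hP x) (specNorm_nonneg M)
    _ = specNorm M := mul_one _

end MatrixNorms

section ProjCompl

variable {n : ℕ}

/-- The orthogonal projection onto `u^⊥`; it is `1` when `u = 0`, since `0⁻¹ = 0`. -/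
noncomputable def projCompl (u : Fin n → ℝ) : Matrix (Fin n) (Fin n) ℝ :=
  1 - (∑ i, u i ^ 2)⁻¹ • vecMulVec u u

lemma projCompl_transpose (u : Fin n → ℝ) : (projCompl u)ᵀ = projCompl u := by
  simp [projCompl, transpose_vecMulVec]

lemma projCompl_mulVec (u x : Fin n → ℝ) :
    projCompl u *ᵥ x = x - ((∑ i, u i ^ 2)⁻¹ * (u ⬝ᵥ x)) • u := by
  rw [projCompl, sub_mulVec, one_mulVec, smul_mulVec, vecMulVec_mulVec, op_smul_eq_smul, smul_smul]

lemma sum_sq_sub_smul (u x : Fin n → ℝ) (c : ℝ) :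
    ∑ j, (x - c • u) j ^ 2 = ∑ j, x j ^ 2 - 2 * c * (u ⬝ᵥ x) + c ^ 2 * ∑ j, u j ^ 2 := by
  simp only [Pi.sub_apply, Pi.smul_apply, smul_eq_mul, dotProduct, Finset.mul_sum,
    ← Finset.sum_sub_distrib, ← Finset.sum_add_distrib]
  exact Finset.sum_congr rfl fun j _ => by ring

lemma vecNorm_projCompl_mulVec_le (u x : Fin n → ℝ) :
    vecNorm (projCompl u *ᵥ x) ≤ vecNorm x := by
  refine Real.sqrt_le_sqrt ?_
  rw [projCompl_mulVec, sum_sq_sub_smul]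
  set s := ∑ j, u j ^ 2
  set d := u ⬝ᵥ x
  have hgain : 2 * (s⁻¹ * d) * d - (s⁻¹ * d) ^ 2 * s = s⁻¹ * d ^ 2 := by
    rcases eq_or_ne s 0 with hs | hs
    · simp [hs]
    · field_simp; ring
  have : 0 ≤ s⁻¹ * d ^ 2 := by positivity
  linarith

lemma broyd_sub_eq_mul_projCompl (B A : Matrix (Fin n) (Fin n) ℝ) (u : Fin n → ℝ) :
    broyd B A u - A = (B - A) * projCompl u := by
  rw [broyd, projCompl, Matrix.mul_sub, Matrix.mul_one, Matrix.mul_smul, ← neg_sub B A,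
    Matrix.neg_mul, smul_neg]
  abel

end ProjCompl

theorem broyden_update_norm_monotone_general {n : ℕ}
    (A B C : Matrix (Fin n) (Fin n) ℝ)
    (u : Fin n → ℝ) :
    frobNorm (C * (broyd B A u - A)) ≤ frobNorm (C * (B - A)) ∧
    specNorm (C * (broyd B A u - A)) ≤ specNorm (C * (B - A)) := by
  have hP : ∀ x, vecNorm (projCompl u *ᵥ x) ≤ vecNorm x := vecNorm_projCompl_mulVec_le u
  rw [broyd_sub_eq_mul_projCompl, ← Matrix.mul_assoc]
  refine ⟨frobNorm_mul_le_of_forall_vecNorm_vecMul_le _ _ fun x => ?_,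
    specNorm_mul_le_of_forall_vecNorm_mulVec_le _ _ hP⟩
  rw [← projCompl_transpose, vecMul_transpose]
  exact hP x

theorem broyden_update_norm_monotone {n : ℕ} (hn : 1 ≤ n)
    (A B C : Matrix (Fin n) (Fin n) ℝ) (hA : IsUnit A) (hC : IsUnit C)
    (u : Fin n → ℝ) (hu : u ≠ 0) :
    frobNorm (C * (broyd B A u - A)) ≤ frobNorm (C * (B - A)) ∧
    specNorm (C * (broyd B A u - A)) ≤ specNorm (C * (B - A)) :=
  broyden_update_norm_monotone_general A B C u
end

section
/- Let n ≥ 1 be an integer and A, B ∈ ℝ^{n×n}. Let u = e_j be a standard basis vector such that ‖(B − A)e_j‖ = max_{i ∈ {1,…,n}} ‖(B − A)e_i‖ (the greedy choice), and set B₊ := Broyd(B, A, u). Then ‖B₊ − A‖_F² ≤ (1 − 1/n) ‖B − A‖_F². -/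
/-!
Broyden's update along `u` right-multiplies the error `E = B - A` by the orthogonal projector
onto `u⊥`, so row by row Pythagoras gives `‖E₊‖_F² = ‖E‖_F² - ‖E u‖² / ‖u‖²`. For `u = e_j` the
subtracted term is the squared norm of column `j` of `E`; the greedy choice makes it the largest
of the `n` squared column norms, whose sum is `‖E‖_F²`, so it is at least `‖E‖_F² / n`.
-/

open Matrix

lemma vecNorm_sq {n : ℕ} (u : Fin n → ℝ) : vecNorm u ^ 2 = ∑ i, u i ^ 2 :=
  Real.sq_sqrt (by positivity)

lemma frobNorm_sq {n : ℕ} (M : Matrix (Fin n) (Fin n) ℝ) :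
    frobNorm M ^ 2 = ∑ i, ∑ j, M i j ^ 2 :=
  Real.sq_sqrt (by positivity)

lemma frobNorm_sq_eq_sum_vecNorm_col_sq {n : ℕ} (M : Matrix (Fin n) (Fin n) ℝ) :
    frobNorm M ^ 2 = ∑ j, vecNorm (M *ᵥ Pi.single j 1) ^ 2 := by
  simp only [frobNorm_sq, vecNorm_sq, mulVec_single_one, col_apply]
  exact Finset.sum_comm

/-- Pythagoras for the projection of `x` onto `u⊥`; at `u = 0` it survives through `0⁻¹ = 0`. -/
lemma sum_sub_proj_sq {ι : Type*} [Fintype ι] (x u : ι → ℝ) :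
    ∑ k, (x k - (x ⬝ᵥ u) / (∑ i, u i ^ 2) * u k) ^ 2
      = ∑ k, x k ^ 2 - (x ⬝ᵥ u) ^ 2 / ∑ i, u i ^ 2 := by
  set s := ∑ i, u i ^ 2
  set c := (x ⬝ᵥ u) / s
  have expand : ∑ k, (x k - c * u k) ^ 2 = ∑ k, x k ^ 2 - 2 * c * (x ⬝ᵥ u) + c ^ 2 * s := by
    rw [dotProduct, Finset.mul_sum, Finset.mul_sum, ← Finset.sum_sub_distrib,
      ← Finset.sum_add_distrib]
    exact Finset.sum_congr rfl fun k _ => by ring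
  rw [expand]
  rcases eq_or_ne s 0 with hs | hs
  · simp [c, hs]
  · simp only [c]
    field_simp
    ring

lemma broyd_sub_apply {n : ℕ} (B A : Matrix (Fin n) (Fin n) ℝ) (u : Fin n → ℝ) (r k : Fin n) :
    (broyd B A u - A) r k
      = (B - A) r k - ((B - A) *ᵥ u) r / (∑ i, u i ^ 2) * u k := by
  have hAB : A - B = -(B - A) := (neg_sub B A).symm
  simp only [broyd, hAB, mul_vecMulVec, Matrix.sub_apply, Matrix.add_apply, Matrix.smul_apply,
    vecMulVec_apply, neg_mulVec, Pi.neg_apply, smul_eq_mul]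
  ring

theorem frobNorm_sq_broyd_sub {n : ℕ} (B A : Matrix (Fin n) (Fin n) ℝ) (u : Fin n → ℝ) :
    frobNorm (broyd B A u - A) ^ 2
      = frobNorm (B - A) ^ 2 - vecNorm ((B - A) *ᵥ u) ^ 2 / vecNorm u ^ 2 := by
  simp only [frobNorm_sq, vecNorm_sq, broyd_sub_apply, sum_sub_proj_sq, Finset.sum_sub_distrib,
    Finset.sum_div, mulVec]

theorem greedy_broyden_progress_general {n : ℕ}
    (A B : Matrix (Fin n) (Fin n) ℝ) (j : Fin n)
    (hj : ∀ i : Fin n,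
      vecNorm ((B - A).mulVec (Pi.single i 1)) ≤ vecNorm ((B - A).mulVec (Pi.single j 1))) :
    frobNorm (broyd B A (Pi.single j 1) - A) ^ 2
      ≤ (1 - 1 / (n : ℝ)) * frobNorm (B - A) ^ 2 := by
  set colNormSq := fun i : Fin n => vecNorm ((B - A) *ᵥ Pi.single i 1) ^ 2
  have hunit : vecNorm (Pi.single j 1 : Fin n → ℝ) ^ 2 = 1 := by
    simp [vecNorm_sq, Pi.single_apply]
  have hgreedy : frobNorm (B - A) ^ 2 ≤ n * colNormSq j := by
    calc frobNorm (B - A) ^ 2 = ∑ i, colNormSq i := frobNorm_sq_eq_sum_vecNorm_col_sq _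
      _ ≤ ∑ _i : Fin n, colNormSq j := Finset.sum_le_sum fun i _ =>
          pow_le_pow_left₀ (Real.sqrt_nonneg _) (hj i) 2
      _ = n * colNormSq j := by simp
  have hcol : frobNorm (B - A) ^ 2 / n ≤ colNormSq j :=
    div_le_of_le_mul₀ n.cast_nonneg (sq_nonneg _) (by rwa [mul_comm])
  rw [frobNorm_sq_broyd_sub, hunit, div_one, one_sub_mul, one_div_mul_eq_div]
  linarith

theorem greedy_broyden_progress {n : ℕ} (hn : 1 ≤ n)
    (A B : Matrix (Fin n) (Fin n) ℝ) (j : Fin n)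
    (hj : ∀ i : Fin n,
      vecNorm ((B - A).mulVec (Pi.single i 1)) ≤ vecNorm ((B - A).mulVec (Pi.single j 1))) :
    frobNorm (broyd B A (Pi.single j 1) - A) ^ 2
      ≤ (1 - 1 / (n : ℝ)) * frobNorm (B - A) ^ 2 :=
  greedy_broyden_progress_general A B j hj
end

section
/- Let n ≥ 1 be an integer and let c, M, r₀, σ₀ > 0. Call q ∈ (0,1) feasible if cσ₀ ≤ q/(q+1) and √n c M r₀ ≤ (q(1−q)/12)·(q/(1+q) − cσ₀). Suppose 48√n c M r₀ + cσ₀ ≤ 1/3. Then q = 1/2 is feasible, and q_m := inf{q ∈ (0,1) : q feasible} satisfies 0.5(cσ₀ + √(√n c M r₀)) ≤ q_m ≤ 7(cσ₀ + √(√n c M r₀)). -/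
private lemma qm_aux (t B : ℝ) (hB : 0 < B) (ht : 0 < t) (h7 : 7 * t < 1/2)
    (hBt : B ≤ t) (A : ℝ) (hAt : A ≤ t ^ 2) :
    0 < 7*t ∧ 7*t < 1 ∧ B ≤ 7*t / (7*t + 1) ∧
      A ≤ 7 * t * (1 - 7 * t) / 12 * (7 * t / (1 + 7 * t) - B) := by
  have ht14 : t < 1/14 := by linarith
  refine ⟨by linarith, by linarith, ?_, ?_⟩
  · rw [le_div_iff₀ (by linarith : (0:ℝ) < 7*t+1)]
    nlinarith
  · have hden : (0:ℝ) < 1 + 7 * t := by linarith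
    have hd1 : 14 * t / 3 ≤ 7 * t / (1 + 7 * t) := by
      rw [div_le_div_iff₀ (by norm_num : (0:ℝ) < 3) hden]
      nlinarith
    have hf1 : 7*t/24 ≤ 7 * t * (1 - 7 * t) / 12 := by nlinarith
    have hf2 : 11*t/3 ≤ 7 * t / (1 + 7 * t) - B := by linarith
    have hprod := mul_le_mul hf1 hf2 (by linarith) (by nlinarith)
    nlinarith [hprod]

theorem qm_bounds (n : ℕ) (hn : 1 ≤ n) (c M r0 s0 : ℝ)
    (hc : 0 < c) (hM : 0 < M) (hr0 : 0 < r0) (hs0 : 0 < s0)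
    (hinit : 48 * Real.sqrt n * c * M * r0 + c * s0 ≤ 1 / 3) :
    (0 < (1/2 : ℝ) ∧ (1/2 : ℝ) < 1 ∧ c * s0 ≤ (1/2 : ℝ) / ((1/2 : ℝ) + 1) ∧
      Real.sqrt n * c * M * r0
        ≤ (1/2 : ℝ) * (1 - (1/2 : ℝ)) / 12 * ((1/2 : ℝ) / (1 + (1/2 : ℝ)) - c * s0)) ∧
    0.5 * (c * s0 + Real.sqrt (Real.sqrt n * c * M * r0))
        ≤ sInf {q : ℝ | 0 < q ∧ q < 1 ∧ c * s0 ≤ q / (q + 1) ∧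
            Real.sqrt n * c * M * r0 ≤ q * (1 - q) / 12 * (q / (1 + q) - c * s0)} ∧
    sInf {q : ℝ | 0 < q ∧ q < 1 ∧ c * s0 ≤ q / (q + 1) ∧
            Real.sqrt n * c * M * r0 ≤ q * (1 - q) / 12 * (q / (1 + q) - c * s0)}
      ≤ 7 * (c * s0 + Real.sqrt (Real.sqrt n * c * M * r0)) := by
  have hn' : (0:ℝ) < n := by exact_mod_cast hn
  have hsn : 0 < Real.sqrt n := Real.sqrt_pos.mpr hn'
  set A := Real.sqrt n * c * M * r0 with hAdef
  have hA : 0 < A := by positivity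
  have hB : 0 < c * s0 := mul_pos hc hs0
  have hsum : 48 * A + c * s0 ≤ 1 / 3 := by
    have : 48 * A = 48 * Real.sqrt n * c * M * r0 := by ring
    linarith [this ▸ hinit]
  set S := {q : ℝ | 0 < q ∧ q < 1 ∧ c * s0 ≤ q / (q + 1) ∧
      A ≤ q * (1 - q) / 12 * (q / (1 + q) - c * s0)} with hSdef
  have hhalf : (1/2 : ℝ) ∈ S := by
    refine ⟨by norm_num, by norm_num, ?_, ?_⟩
    · norm_num; linarith
    · norm_num; nlinarith
  have hbdd : BddBelow S := ⟨0, fun q hq => hq.1.le⟩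
  have hsA : Real.sqrt A ^ 2 = A := Real.sq_sqrt hA.le
  have hsApos : 0 < Real.sqrt A := Real.sqrt_pos.mpr hA
  -- lower bound for every feasible q
  have hlow : ∀ q ∈ S, 0.5 * (c * s0 + Real.sqrt A) ≤ q := by
    rintro q ⟨hq0, hq1, h1, h2⟩
    have hq1' : (0:ℝ) < q + 1 := by linarith
    have hq1'' : (0:ℝ) < 1 + q := by linarith
    have hBq : c * s0 ≤ q := le_trans h1 (div_le_self hq0.le (by linarith))
    have hd : (q / (1 + q)) * (1 + q) = q := div_mul_cancel₀ _ (ne_of_gt hq1'')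
    have hdle : q / (1 + q) ≤ q := div_le_self hq0.le (by linarith)
    have hdnn : 0 ≤ q / (1 + q) := by positivity
    have hAq : A ≤ q ^ 2 := by nlinarith [h2, hA, hq0, hq1, hB, hdle, hdnn]
    have hsAq : Real.sqrt A ≤ q := by
      calc Real.sqrt A ≤ Real.sqrt (q ^ 2) := Real.sqrt_le_sqrt hAq
        _ = q := Real.sqrt_sq hq0.le
    linarith
  refine ⟨⟨by norm_num, by norm_num, hhalf.2.2.1, hhalf.2.2.2⟩,
    le_csInf ⟨1/2, hhalf⟩ hlow, ?_⟩
  set t := c * s0 + Real.sqrt A with htdef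
  have ht : 0 < t := by positivity
  have hAt : A ≤ t ^ 2 := by nlinarith [hsA, hB, hsApos]
  have hBt : c * s0 ≤ t := by nlinarith [hsApos]
  clear_value t
  clear_value A
  clear hAdef htdef hlow hinit hsA hsApos hsn hn' hn hsum
  rcases le_or_gt (1/2 : ℝ) (7 * t) with h7 | h7
  · exact le_trans (csInf_le hbdd hhalf) h7
  · have h := qm_aux t (c * s0) hB ht h7 hBt A hAt
    exact csInf_le hbdd ⟨h.1, h.2.1, h.2.2.1, h.2.2.2⟩
end
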